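/- The function λ(x) = (108x⁴ + 132x² + 11)/(36x⁴ + 96x² + 8), defined for x ≥ 0 (including the limit at +∞), has image exactly the interval [11/8, 3]: λ(0) = 11/8, the limit of λ(x) as x → ∞ equals 3, λ is strictly increasing on [0, ∞), and every value in [11/8, 3) is attained. -/

import Mathlib

open Filter

/-- The slope function for the spin construction. -/
noncomputable def lamSpin (x : ℝ) : ℝ :=
  (108 * x ^ 4 + 132 * x ^ 2 + 11) / (36 * x ^ 4 + 96 * x ^ 2 + 8)

open Set Topology

section IntermediateValue

variable {α δ : Type*} [ConditionallyCompleteLinearOrder α] [TopologicalSpace α] [OrderTopology α]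
  [DenselyOrdered α] [LinearOrder δ] [TopologicalSpace δ] [OrderClosedTopology δ]

theorem ContinuousOn.surjOn_Ico_of_tendsto_atTop {f : α → δ} {a : α} {b : δ}
    (hf : ContinuousOn f (Ici a)) (hb : Tendsto f atTop (𝓝 b)) :
    SurjOn f (Ici a) (Ico (f a) b) := by
  rintro y ⟨hay, hyb⟩
  obtain ⟨c, hac, hyc⟩ :=
    ((eventually_ge_atTop a).and (hb.eventually (eventually_gt_nhds hyb))).exists
  exact hf.surjOn_Icc self_mem_Ici hac ⟨hay, hyc.le⟩

end IntermediateValue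

lemma lamSpin_denom_pos (x : ℝ) : 0 < 36 * x ^ 4 + 96 * x ^ 2 + 8 := by positivity

lemma continuous_lamSpin : Continuous lamSpin :=
  .div (by fun_prop) (by fun_prop) fun x ↦ (lamSpin_denom_pos x).ne'

lemma lamSpin_eq_of_ne_zero {x : ℝ} (hx : x ≠ 0) :
    lamSpin x = (108 + 132 * (x ^ 2)⁻¹ + 11 * ((x ^ 2)⁻¹) ^ 2) /
      (36 + 96 * (x ^ 2)⁻¹ + 8 * ((x ^ 2)⁻¹) ^ 2) := by
  rw [lamSpin]
  field_simp

lemma tendsto_lamSpin_atTop : Tendsto lamSpin atTop (𝓝 3) := by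
  have hu : Tendsto (fun x : ℝ ↦ (x ^ 2)⁻¹) atTop (𝓝 0) :=
    tendsto_inv_atTop_zero.comp (tendsto_pow_atTop two_ne_zero)
  have hg : ContinuousAt (fun u : ℝ ↦ (108 + 132 * u + 11 * u ^ 2) / (36 + 96 * u + 8 * u ^ 2))
      0 := by
    fun_prop (disch := norm_num)
  have hlim : Tendsto (fun u : ℝ ↦ (108 + 132 * u + 11 * u ^ 2) / (36 + 96 * u + 8 * u ^ 2))
      (𝓝 0) (𝓝 3) := by
    convert hg.tendsto using 2
    norm_num
  refine (hlim.comp hu).congr' ?_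
  filter_upwards [eventually_ne_atTop 0] with x hx
  exact (lamSpin_eq_of_ne_zero hx).symm

lemma lamSpin_sub_lamSpin (a b : ℝ) :
    lamSpin b - lamSpin a = 468 * (b ^ 2 - a ^ 2) * (12 * a ^ 2 * b ^ 2 + a ^ 2 + b ^ 2) /
      ((36 * b ^ 4 + 96 * b ^ 2 + 8) * (36 * a ^ 4 + 96 * a ^ 2 + 8)) := by
  rw [lamSpin, lamSpin, div_sub_div _ _ (lamSpin_denom_pos b).ne' (lamSpin_denom_pos a).ne']
  ring

lemma strictMonoOn_lamSpin : StrictMonoOn lamSpin (Ici 0) := by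
  intro a ha b _ hab
  have hb : 0 < b := ha.trans_lt hab
  have hsq : 0 < b ^ 2 - a ^ 2 := sub_pos.2 (pow_lt_pow_left₀ hab ha two_ne_zero)
  rw [← sub_pos, lamSpin_sub_lamSpin]
  positivity

/-- `λ(x) = (108x⁴+132x²+11)/(36x⁴+96x²+8)` satisfies `λ(0) = 11/8`,
`λ(x) → 3` as `x → ∞`, `λ` is strictly increasing on `[0, ∞)`, and every value
in `[11/8, 3)` is attained on `[0, ∞)`; hence its image (including the limit at `+∞`)
is exactly `[11/8, 3]`. -/
theorem lamSpin_image :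
    lamSpin 0 = 11 / 8 ∧
    Tendsto lamSpin atTop (nhds 3) ∧
    StrictMonoOn lamSpin (Set.Ici 0) ∧
    (∀ y ∈ Set.Ico (11 / 8 : ℝ) 3, ∃ x, 0 ≤ x ∧ lamSpin x = y) := by
  have h0 : lamSpin 0 = 11 / 8 := by norm_num [lamSpin]
  refine ⟨h0, tendsto_lamSpin_atTop, strictMonoOn_lamSpin, ?_⟩
  intro y hy
  rw [← h0] at hy
  exact continuous_lamSpin.continuousOn.surjOn_Ico_of_tendsto_atTop tendsto_lamSpin_atTop hy
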